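/- Let n = p₁ p₂ ⋯ p_k be the product of the k smallest primes, and let π = p_{k+1} be the (k+1)-st smallest prime. Then every prime p with π ≤ p < 2π divides n^(n^n) - 1. -/

import Mathlib

/-!
Every prime below `π` divides `n`, while `π ≤ n + 1` because a prime factor of `n + 1` cannot
divide `n`. For a prime `π ≤ p < 2π` the number `p - 1` is even, so each prime factor `q` of `p - 1`
is `2` or satisfies `2q ≤ p - 1 < 2π`; hence all prime factors of `p - 1` divide `n`. Since
`p - 1 ≤ 2n < 2 ^ (n + 1)`, no exponent in `p - 1` exceeds `n`, so `p - 1 ∣ n ^ n`, and Fermat's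
little theorem gives `n ^ (n ^ n) ≡ 1 [MOD p]` because `p ∤ n`.
-/

open Finset

namespace Nat

theorem prime_dvd_prod_nth_prime_iff {q : ℕ} (hq : q.Prime) (k : ℕ) :
    q ∣ ∏ i ∈ range k, nth Nat.Prime i ↔ q < nth Nat.Prime k := by
  constructor
  · intro hdvd
    obtain ⟨i, hi, hqi⟩ := hq.prime.exists_mem_finset_dvd hdvd
    rw [(prime_dvd_prime_iff_eq hq (prime_nth_prime i)).1 hqi]
    exact nth_strictMono infinite_setOfPred_prime (mem_range.1 hi)
  · intro hlt
    rw [← nth_count hq] at hlt ⊢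
    exact dvd_prod_of_mem _ (mem_range.2 ((nth_lt_nth infinite_setOfPred_prime).1 hlt))

theorem nth_prime_le_prod_nth_prime_add_one (k : ℕ) :
    nth Nat.Prime k ≤ ∏ i ∈ range k, nth Nat.Prime i + 1 := by
  set N := ∏ i ∈ range k, nth Nat.Prime i
  have hN : N ≠ 0 := prod_ne_zero_iff.2 fun i _ => (prime_nth_prime i).ne_zero
  have hq : (N + 1).minFac.Prime := minFac_prime (by omega)
  have hqN : ¬ (N + 1).minFac ∣ N := fun h =>
    hq.one_lt.ne' (eq_one_of_dvd_one ((Nat.dvd_add_right h).1 (minFac_dvd (N + 1))))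
  rw [prime_dvd_prod_nth_prime_iff hq] at hqN
  exact (not_lt.1 hqN).trans (minFac_le (succ_pos N))

theorem eq_two_or_two_mul_le_of_dvd_sub_one {p q : ℕ} (hp : p.Prime) (hp2 : p ≠ 2) (hq : q.Prime)
    (hqp : q ∣ p - 1) : q = 2 ∨ 2 * q ≤ p - 1 := by
  by_cases hq2 : q = 2
  · exact .inl hq2
  have h2p : 2 ∣ p - 1 := by
    obtain ⟨m, rfl⟩ := hp.odd_of_ne_two hp2
    omega
  have hcop : Coprime 2 q := (coprime_primes prime_two hq).2 (Ne.symm hq2)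
  exact .inr (le_of_dvd (by have := hp.two_le; omega) (hcop.mul_dvd_of_dvd_of_dvd h2p hqp))

theorem dvd_pow_of_forall_prime_dvd {m n j : ℕ} (hm : m ≠ 0) (hn : n ≠ 0) (hmj : m < 2 ^ (j + 1))
    (h : ∀ q, q.Prime → q ∣ m → q ∣ n) : m ∣ n ^ j := by
  rw [← factorization_prime_le_iff_dvd hm (pow_ne_zero j hn)]
  intro q hq
  rw [factorization_pow, Finsupp.smul_apply, smul_eq_mul]
  by_cases hqm : q ∣ m
  · have hexp : m.factorization q ≤ j :=
      Nat.lt_add_one_iff.1 <| (Nat.pow_lt_pow_iff_right hq.one_lt).1 <|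
        (ordProj_le q hm).trans_lt (hmj.trans_le (Nat.pow_le_pow_left hq.two_le _))
    have hqn : 1 ≤ n.factorization q := (hq.dvd_iff_one_le_factorization hn).1 (h q hq hqm)
    exact hexp.trans (Nat.le_mul_of_pos_right j hqn)
  · simp [factorization_eq_zero_of_not_dvd hqm]

theorem Prime.dvd_pow_sub_one_of_sub_one_dvd {p a e : ℕ} (hp : p.Prime) (ha : Coprime a p)
    (he : p - 1 ∣ e) : p ∣ a ^ e - 1 := by
  have hfermat : a ^ (p - 1) ≡ 1 [MOD p] := totient_prime hp ▸ ModEq.pow_totient ha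
  obtain ⟨c, rfl⟩ := he
  refine (modEq_iff_dvd' (one_le_pow _ _ (pos_of_ne_zero ?_))).1 ?_
  · rintro rfl
    exact hp.one_lt.ne' (coprime_zero_left p |>.1 ha)
  · rw [pow_mul]
    simpa using (hfermat.pow c).symm

end Nat

theorem primes_up_to_double_divide (k : ℕ) (hk : 1 ≤ k) (n π : ℕ)
    (hn : n = ∏ i ∈ Finset.range k, Nat.nth Nat.Prime i)
    (hπ : π = Nat.nth Nat.Prime k) :
    ∀ p : ℕ, p.Prime → π ≤ p → p < 2 * π → p ∣ n ^ (n ^ n) - 1 := by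
  intro p hp hπp hp2π
  have hdvd_n : ∀ q, q.Prime → (q ∣ n ↔ q < π) := fun q hq =>
    hn ▸ hπ ▸ Nat.prime_dvd_prod_nth_prime_iff hq k
  have hn0 : n ≠ 0 := hn ▸ prod_ne_zero_iff.2 fun i _ => (Nat.prime_nth_prime i).ne_zero
  have hπn : π ≤ n + 1 := hn ▸ hπ ▸ Nat.nth_prime_le_prod_nth_prime_add_one k
  have hπ3 : 3 ≤ π :=
    hπ ▸ Nat.nth_prime_one_eq_three ▸ Nat.nth_monotone Nat.infinite_setOfPred_prime hk
  have hcop : Nat.Coprime n p :=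
    (hp.coprime_iff_not_dvd.2 fun h => (hdvd_n p hp).1 h |>.not_ge hπp).symm
  have hp1 : p - 1 ∣ n ^ n := by
    refine Nat.dvd_pow_of_forall_prime_dvd (by omega) hn0 ?_ fun q hq hqp => (hdvd_n q hq).2 ?_
    · have := n.lt_two_pow_self
      rw [pow_succ]
      omega
    · rcases Nat.eq_two_or_two_mul_le_of_dvd_sub_one hp (by omega) hq hqp with rfl | h <;> omega
  exact hp.dvd_pow_sub_one_of_sub_one_dvd hcop hp1
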